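/- Let G and H be graphs and let D be a distribution of pebbles on G □ H. Color each pebble on vertex (w_i, v_j) with color c_i (one color per vertex of G), and let D̃ be the resulting g-colored distribution on H obtained by collapsing G □ {v_j} to the vertex v_j (g = |V(G)|). If D̃ is γ(G)-coverable by color-respecting pebbling steps on H, then D is coverable on G □ H. -/

import Mathlib

/-!
A color-respecting step on `H` moves pebbles inside one copy `{w} × H` of `H`, so it is a
pebbling step of `G □ H`. Hence `D` can be moved to a distribution whose fibre `G × {v}` holds at
least `γ(G)` pebbles for every `v`, and each fibre, a copy of `G`, can then be covered on its own.

For connected `G` the infimum defining `γ(G)` is over a nonempty set, hence attained: a pile of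
`2 ^ |V|` pebbles can send one pebble along a path to any vertex, so `|V| ^ 2 * 2 ^ |V|` pebbles
always cover `G`.
-/

open SimpleGraph Finset

/-- A pebbling step: remove two pebbles from `u` and place one on an adjacent vertex `v`. -/
def PebblingStep {V : Type*} [DecidableEq V] (G : SimpleGraph V) (D D' : V → ℕ) : Prop :=
  ∃ u v, G.Adj u v ∧ 2 ≤ D u ∧
    D' = fun w => if w = u then D u - 2 else if w = v then D v + 1 else D w

/-- A distribution is coverable if pebbling steps can put a pebble on every vertex. -/
def Coverable {V : Type*} [DecidableEq V] (G : SimpleGraph V) (D : V → ℕ) : Prop :=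
  ∃ D', Relation.ReflTransGen (PebblingStep G) D D' ∧ ∀ v, 1 ≤ D' v

/-- The cover pebbling number: the least `N` such that every distribution of `N` pebbles
is coverable. -/
noncomputable def coverPebblingNumber {V : Type*} [DecidableEq V] [Fintype V]
    (G : SimpleGraph V) : ℕ :=
  sInf {N | ∀ D : V → ℕ, ∑ v, D v = N → Coverable G D}

/-- A color-respecting pebbling step on a colored distribution. -/
def ColorStep {V C : Type*} [DecidableEq V] [DecidableEq C] (G : SimpleGraph V)
    (D D' : V → C → ℕ) : Prop :=
  ∃ u v c, G.Adj u v ∧ 2 ≤ D u c ∧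
    D' = fun w d => if w = u ∧ d = c then D u c - 2
      else if w = v ∧ d = c then D v c + 1 else D w d

/-- A colored distribution is `Q`-coverable if color-respecting steps can put at least `Q`
pebbles on every vertex. -/
def QCoverable {V C : Type*} [DecidableEq V] [DecidableEq C] [Fintype C] (G : SimpleGraph V)
    (Q : ℕ) (D : V → C → ℕ) : Prop :=
  ∃ D', Relation.ReflTransGen (ColorStep G) D D' ∧ ∀ v, Q ≤ ∑ c, D' v c

/-- A graph is good if its cover pebbling number is realized by a simple distribution. -/
def IsGood {V : Type*} [DecidableEq V] [Fintype V] (G : SimpleGraph V) : Prop :=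
  ∃ u : V, coverPebblingNumber G = ∑ w : V, 2 ^ G.dist u w

open Relation

section Pebbling

variable {V : Type*} [DecidableEq V] {G : SimpleGraph V}

lemma pebblingStep_add_single {u v : V} (hadj : G.Adj u v) (E : V → ℕ) :
    PebblingStep G (E + Pi.single u 2) (E + Pi.single v 1) := by
  refine ⟨u, v, hadj, by simp, funext fun w => ?_⟩
  by_cases hwu : w = u
  · subst hwu; simp [hadj.ne]
  · by_cases hwv : w = v
    · subst hwv; simp [hwu]
    · simp [hwu, hwv]

lemma PebblingStep.add_right {D D' : V → ℕ} (h : PebblingStep G D D') (F : V → ℕ) :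
    PebblingStep G (D + F) (D' + F) := by
  obtain ⟨u, v, hadj, h2, rfl⟩ := h
  refine ⟨u, v, hadj, le_add_right h2, funext fun w => ?_⟩
  simp only [Pi.add_apply]
  split_ifs <;> subst_vars <;> omega

lemma reflTransGen_add_right {D D' : V → ℕ}
    (h : ReflTransGen (PebblingStep G) D D') (F : V → ℕ) :
    ReflTransGen (PebblingStep G) (D + F) (D' + F) :=
  h.lift (· + F) fun _ _ hs => hs.add_right F

lemma reflTransGen_add {D D' F F' : V → ℕ}
    (hD : ReflTransGen (PebblingStep G) D D')
    (hF : ReflTransGen (PebblingStep G) F F') :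
    ReflTransGen (PebblingStep G) (D + F) (D' + F') :=
  (reflTransGen_add_right hD F).trans <| by
    simpa only [add_comm D'] using reflTransGen_add_right hF D'

lemma reflTransGen_sum {ι : Type*} (s : Finset ι) {D D' : ι → V → ℕ}
    (h : ∀ i ∈ s, ReflTransGen (PebblingStep G) (D i) (D' i)) :
    ReflTransGen (PebblingStep G) (∑ i ∈ s, D i) (∑ i ∈ s, D' i) := by
  induction s using Finset.cons_induction with
  | empty => simpa using ReflTransGen.refl
  | cons i s hi ih =>
    simp only [Finset.sum_cons, Finset.forall_mem_cons] at h ⊢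
    exact reflTransGen_add h.1 (ih h.2)

lemma exists_eq_add_single_of_le {D : V → ℕ} {u : V} {n : ℕ} (h : n ≤ D u) :
    ∃ E : V → ℕ, D = E + Pi.single u n := by
  obtain ⟨E, hE⟩ := exists_add_of_le (show Pi.single u n ≤ D from fun w => by
    rcases eq_or_ne w u with rfl | hw <;> simp [*])
  exact ⟨E, hE.trans (add_comm _ _)⟩

lemma reflTransGen_add_single_of_adj {u v : V} (hadj : G.Adj u v) (k : ℕ) (E : V → ℕ) :
    ReflTransGen (PebblingStep G) (E + Pi.single u (2 * k)) (E + Pi.single v k) := by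
  induction k generalizing E with
  | zero => simpa using ReflTransGen.refl
  | succ k ih =>
    have hstep := pebblingStep_add_single hadj (E + Pi.single u (2 * k))
    have hrest := ih (E + Pi.single v 1)
    rw [add_right_comm E (Pi.single v 1), add_assoc E (Pi.single v 1), ← Pi.single_add,
      add_comm 1 k] at hrest
    rw [mul_add, mul_one, Pi.single_add, ← add_assoc]
    exact (ReflTransGen.single hstep).trans hrest

lemma reflTransGen_add_single_of_walk {u v : V} (p : G.Walk u v) (k : ℕ) (E : V → ℕ) :
    ReflTransGen (PebblingStep G) (E + Pi.single u (2 ^ p.length * k))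
      (E + Pi.single v k) := by
  induction p generalizing k with
  | nil => simpa using ReflTransGen.refl
  | cons hadj p ih =>
    rw [SimpleGraph.Walk.length_cons, pow_succ', mul_assoc]
    exact (reflTransGen_add_single_of_adj hadj _ E).trans (ih k)

lemma Coverable.mono {D E : V → ℕ} (h : Coverable G D) (hle : D ≤ E) : Coverable G E := by
  obtain ⟨F, rfl⟩ := exists_add_of_le hle
  obtain ⟨D', hD', h1⟩ := h
  exact ⟨D' + F, reflTransGen_add_right hD' F, fun v => (h1 v).trans (le_add_right le_rfl)⟩

end Pebbling

section Coverable

variable {V : Type*} [DecidableEq V] [Fintype V] {G : SimpleGraph V}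

lemma exists_reflTransGen_one_le_of_card_mul_le (hG : G.Connected) (S : Finset V) {D : V → ℕ}
    (hD : #S * (Fintype.card V * 2 ^ Fintype.card V) ≤ ∑ v, D v) :
    ∃ D', ReflTransGen (PebblingStep G) D D' ∧ ∀ v ∈ S, 1 ≤ D' v := by
  induction S using Finset.induction_on generalizing D with
  | empty => exact ⟨D, .refl, by simp⟩
  | insert a S ha ih =>
    set g := Fintype.card V
    rw [card_insert_of_notMem ha, add_one_mul] at hD
    obtain ⟨u, -, hu⟩ : ∃ u ∈ univ, 2 ^ g ≤ D u := by
      refine exists_le_of_sum_le ⟨a, mem_univ a⟩ ?_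
      simpa [g] using le_add_self.trans hD
    let p := (hG u a).some.toPath
    have hp : 2 ^ p.1.length ≤ 2 ^ g := Nat.pow_le_pow_right two_pos p.2.length_lt.le
    obtain ⟨E, rfl⟩ := exists_eq_add_single_of_le (hp.trans hu)
    have hE : #S * (g * 2 ^ g) ≤ ∑ v, E v := by
      have hg : 2 ^ g ≤ g * 2 ^ g := Nat.le_mul_of_pos_left _ (Fintype.card_pos_iff.mpr ⟨a⟩)
      simp only [Pi.add_apply, sum_add_distrib, sum_pi_single', mem_univ, if_true] at hD
      omega
    obtain ⟨D', hED', hS⟩ := ih hE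
    refine ⟨D' + Pi.single a 1, ?_, fun v hv => ?_⟩
    · simpa using (reflTransGen_add_single_of_walk p.1 1 E).trans (reflTransGen_add_right hED' _)
    · rcases mem_insert.mp hv with rfl | hv
      · simp
      · exact (hS v hv).trans (le_add_right le_rfl)

lemma exists_le_sum_eq {n : ℕ} {D : V → ℕ} (h : n ≤ ∑ v, D v) :
    ∃ D₀ ≤ D, ∑ v, D₀ v = n := by
  induction n with
  | zero => exact ⟨0, zero_le, by simp⟩
  | succ n ih =>
    obtain ⟨D₀, hle, hsum⟩ := ih (by omega)
    obtain ⟨v, -, hv⟩ := exists_lt_of_sum_lt (s := univ) (f := D₀) (g := D) (by omega)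
    refine ⟨D₀ + Pi.single v 1, fun w => ?_, by simp [sum_add_distrib, hsum]⟩
    rcases eq_or_ne w v with rfl | hw
    · simpa using hv
    · simpa [hw] using hle w

lemma coverable_of_card_mul_le (hG : G.Connected) {D : V → ℕ}
    (hD : Fintype.card V * (Fintype.card V * 2 ^ Fintype.card V) ≤ ∑ v, D v) :
    Coverable G D := by
  obtain ⟨D', hD', h1⟩ := exists_reflTransGen_one_le_of_card_mul_le hG univ (by rwa [card_univ])
  exact ⟨D', hD', fun v => h1 v (mem_univ v)⟩

lemma coverable_of_sum_eq_coverPebblingNumber (hG : G.Connected) {D : V → ℕ}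
    (hD : ∑ v, D v = coverPebblingNumber G) : Coverable G D :=
  Nat.sInf_mem (s := {N | ∀ D : V → ℕ, ∑ v, D v = N → Coverable G D})
    ⟨_, fun _ h => coverable_of_card_mul_le hG h.ge⟩ D hD

lemma coverable_of_coverPebblingNumber_le (hG : G.Connected) {D : V → ℕ}
    (hD : coverPebblingNumber G ≤ ∑ v, D v) : Coverable G D := by
  obtain ⟨D₀, hle, hsum⟩ := exists_le_sum_eq hD
  exact (coverable_of_sum_eq_coverPebblingNumber hG hsum).mono hle

end Coverable

section BoxProd

variable {Vg Vh : Type*}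

/-- A `Vg`-colored distribution on `H`, read as a distribution on `G □ H`: the pebbles of color
`w` on `v` sit on `(w, v)`. Equivalently, a family of distributions on the fibres `G × {v}`. -/
def ofFibers (f : Vh → Vg → ℕ) : Vg × Vh → ℕ := fun p => f p.2 p.1

lemma ofFibers_sum {ι : Type*} (s : Finset ι) (f : ι → Vh → Vg → ℕ) :
    ofFibers (∑ i ∈ s, f i) = ∑ i ∈ s, ofFibers (f i) := by
  ext p
  simp [ofFibers, Finset.sum_apply]

variable [DecidableEq Vg] [DecidableEq Vh] {G : SimpleGraph Vg} {H : SimpleGraph Vh}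

lemma ColorStep.pebblingStep_boxProd (G : SimpleGraph Vg) {f f' : Vh → Vg → ℕ}
    (h : ColorStep H f f') : PebblingStep (G □ H) (ofFibers f) (ofFibers f') := by
  obtain ⟨u, v, c, hadj, h2, rfl⟩ := h
  refine ⟨(c, u), (c, v), Or.inr ⟨hadj, rfl⟩, h2, funext fun ⟨a, b⟩ => ?_⟩
  simp [ofFibers, Prod.ext_iff, and_comm]

lemma PebblingStep.ofFibers_single (H : SimpleGraph Vh) (v : Vh) {f f' : Vg → ℕ}
    (h : PebblingStep G f f') :
    PebblingStep (G □ H) (ofFibers (Pi.single v f)) (ofFibers (Pi.single v f')) := by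
  obtain ⟨u, x, hadj, h2, rfl⟩ := h
  refine ⟨(u, v), (x, v), Or.inl ⟨hadj, rfl⟩, by simpa [ofFibers], funext fun ⟨a, b⟩ => ?_⟩
  rcases eq_or_ne b v with rfl | hb
  · simp [ofFibers]
  · simp [ofFibers, hb]

lemma reflTransGen_ofFibers [Fintype Vh] {f f' : Vh → Vg → ℕ}
    (h : ∀ v, ReflTransGen (PebblingStep G) (f v) (f' v)) :
    ReflTransGen (PebblingStep (G □ H)) (ofFibers f) (ofFibers f') := by
  rw [← univ_sum_single f, ← univ_sum_single f', ofFibers_sum, ofFibers_sum]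
  exact reflTransGen_sum _ fun v _ => (h v).lift _ fun _ _ hs => hs.ofFibers_single H v

end BoxProd

theorem prod_coverable_of_colored_coverable_general {Vg Vh : Type*}
    [DecidableEq Vg] [Fintype Vg] [DecidableEq Vh] [Fintype Vh]
    (G : SimpleGraph Vg) (H : SimpleGraph Vh) (hG : G.Connected)
    (D : Vg × Vh → ℕ)
    (h : QCoverable H (coverPebblingNumber G) (fun v w => D (w, v))) :
    Coverable (G □ H) D := by
  obtain ⟨D', hcolor, hfibers⟩ := h
  have hspread : ReflTransGen (PebblingStep (G □ H)) D (ofFibers D') :=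
    hcolor.lift ofFibers fun _ _ hs => hs.pebblingStep_boxProd G
  choose F hF hcover using fun v => coverable_of_coverPebblingNumber_le hG (hfibers v)
  exact ⟨ofFibers F, hspread.trans (reflTransGen_ofFibers hF), fun p => hcover p.2 p.1⟩

theorem prod_coverable_of_colored_coverable {Vg Vh : Type*}
    [DecidableEq Vg] [Fintype Vg] [DecidableEq Vh] [Fintype Vh] [Nonempty Vg]
    (G : SimpleGraph Vg) (H : SimpleGraph Vh) (hG : G.Connected)
    (D : Vg × Vh → ℕ)
    (h : QCoverable H (coverPebblingNumber G) (fun v w => D (w, v))) :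
    Coverable (G □ H) D :=
  prod_coverable_of_colored_coverable_general G H hG D h
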